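/- arXiv:2506.16864 — 3 statements merged into one kernel-verified Lean document; each statement's English description precedes it below -/
import Mathlib

section
/- Let A and B be connected simple graphs, let f : V(A) → V(B) be a function, let a', a'' be vertices of A and b', b'' vertices of B. For every path in A from a' to a'' with vertex sequence a' = u₀, u₁, …, u_{m−1}, u_m = a'' (m ≥ 0), there exists a path P in the Sierpiński product A ⊗_f B from (a',b') to (a'',b'') such that the first coordinate of every vertex of P belongs to {u₀, u₁, …, u_m}. -/
/-- The Sierpiński product of simple graphs `A` and `B` with respect to `f : V(A) → V(B)`:
vertices are pairs `(a, b)`; two vertices are adjacent iff they lie in the same fibre and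
their second coordinates are adjacent in `B`, or their first coordinates are adjacent in `A`
and the second coordinates are given by `f` applied to the other first coordinate. -/
def SierpinskiProd {α β : Type*} (A : SimpleGraph α) (B : SimpleGraph β)
    (f : α → β) : SimpleGraph (α × β) where
  Adj p q := (p.1 = q.1 ∧ B.Adj p.2 q.2) ∨
    (A.Adj p.1 q.1 ∧ p.2 = f q.1 ∧ q.2 = f p.1)
  symm := by
    constructor
    rintro ⟨a₁, b₁⟩ ⟨a₂, b₂⟩ (⟨h, hB⟩ | ⟨hA, h₁, h₂⟩)
    · exact Or.inl ⟨h.symm, hB.symm⟩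
    · exact Or.inr ⟨hA.symm, h₂, h₁⟩
  loopless := by
    constructor
    rintro ⟨a, b⟩ (⟨_, hB⟩ | ⟨hA, _, _⟩)
    · exact B.ne_of_adj hB rfl
    · exact A.ne_of_adj hA rfl

/-- A vertex `v` of a graph `G` is a separating vertex if deleting `v` (taking the induced
subgraph on the remaining vertices) yields a graph that is not connected. -/
def IsSeparatingVertex {V : Type*} (G : SimpleGraph V) (v : V) : Prop :=
  ¬ (G.induce ({v}ᶜ : Set V)).Connected

/-- A graph `G` is `k`-connected if it has more than `k` vertices and deleting any set of
fewer than `k` vertices leaves a connected graph. -/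
def KConnected {V : Type*} [Fintype V] (k : ℕ) (G : SimpleGraph V) : Prop :=
  k < Fintype.card V ∧ ∀ S : Set V, S.ncard < k → (G.induce Sᶜ).Connected

/-- `W` is a cut-set of `G` if deleting all vertices of `W` strictly increases the number of
connected components. -/
def IsCutSet {V : Type*} (G : SimpleGraph V) (W : Set V) : Prop :=
  Nat.card G.ConnectedComponent < Nat.card (G.induce Wᶜ).ConnectedComponent

/-- `W` is a minimal cut-set of `G` if it is a cut-set and no proper subset is a cut-set. -/
def IsMinCutSet {V : Type*} (G : SimpleGraph V) (W : Set V) : Prop :=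
  IsCutSet G W ∧ ∀ W' ⊂ W, ¬ IsCutSet G W'

/-! Walk inside the fibre over `u₀` from `b'` to `f u₁`, cross the edge `(u₀, f u₁) ~ (u₁, f u₀)`,
and continue recursively from `(u₁, f u₀)`. The pieces lie in the fibres over distinct vertices
of the path in `A`, so their concatenation is again a path. -/

open SimpleGraph

theorem SimpleGraph.Walk.IsPath.append_cons {V : Type*} {G : SimpleGraph V} {u v x w : V}
    {p : G.Walk u v} {q : G.Walk x w} (h : G.Adj v x) (hp : p.IsPath) (hq : q.IsPath)
    (hpq : p.support.Disjoint q.support) : (p.append (.cons h q)).IsPath := by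
  rw [Walk.isPath_def, Walk.support_append, Walk.support_cons, List.tail_cons]
  exact hp.support_nodup.append hq.support_nodup hpq

namespace SierpinskiProd

variable {α β : Type*} (A : SimpleGraph α) (B : SimpleGraph β) (f : α → β)

def fibre (a : α) : B ↪g SierpinskiProd A B f where
  toFun := Prod.mk a
  inj' := Prod.mk_right_injective a
  map_rel_iff' := by simp [SierpinskiProd]

variable {A B f}

theorem adj_mk_of_adj {a c : α} (h : A.Adj a c) :
    (SierpinskiProd A B f).Adj (a, f c) (c, f a) :=
  Or.inr ⟨h, rfl, rfl⟩

theorem exists_isPath_fibre (hB : B.Preconnected) (a : α) (b b' : β) :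
    ∃ P : (SierpinskiProd A B f).Walk (a, b) (a, b'), P.IsPath ∧ ∀ v ∈ P.support, v.1 = a := by
  classical
  obtain ⟨q⟩ := hB b b'
  refine ⟨q.toPath.1.map (fibre A B f a).toHom, q.toPath.2.map (fibre A B f a).injective, ?_⟩
  simp [Walk.support_map, fibre]

end SierpinskiProd

theorem sierpinski_path_lift_general {α β : Type*}
    (A : SimpleGraph α) (B : SimpleGraph β) (f : α → β)
    (hB : B.Connected)
    (a' a'' : α) (b' b'' : β) (w : A.Walk a' a'') (hw : w.IsPath) :
    ∃ P : (SierpinskiProd A B f).Walk (a', b') (a'', b''),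
      P.IsPath ∧ ∀ v ∈ P.support, v.1 ∈ w.support := by
  induction w generalizing b' with
  | nil =>
    obtain ⟨P, hP, hfibre⟩ := SierpinskiProd.exists_isPath_fibre (f := f) hB.preconnected _ b' b''
    exact ⟨P, hP, fun v hv => by simp [hfibre v hv]⟩
  | @cons a c a'' hac w ih =>
    rw [Walk.cons_isPath_iff] at hw
    obtain ⟨P, hP, hPw⟩ := ih (f a) hw.1
    obtain ⟨Q, hQ, hfibre⟩ :=
      SierpinskiProd.exists_isPath_fibre (f := f) hB.preconnected a b' (f c)
    refine ⟨Q.append (.cons (SierpinskiProd.adj_mk_of_adj hac) P), hQ.append_cons _ hP ?_, ?_⟩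
    · exact fun v hvQ hvP => hw.2 (hfibre v hvQ ▸ hPw v hvP)
    · intro v hv
      simp only [Walk.support_append, Walk.support_cons, List.tail_cons, List.mem_append] at hv
      rcases hv with hvQ | hvP
      · simp [hfibre v hvQ]
      · exact List.mem_cons_of_mem _ (hPw v hvP)

/-- **Lemma.** Given a path in `A` from `a'` to `a''`, there is a path in `A ⊗_f B` from
`(a', b')` to `(a'', b'')` all of whose vertices have first coordinate among the vertices
of the given path. -/
theorem sierpinski_path_lift {α β : Type*} [Fintype α] [Fintype β]
    (A : SimpleGraph α) (B : SimpleGraph β) (f : α → β)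
    (hA : A.Connected) (hB : B.Connected)
    (a' a'' : α) (b' b'' : β) (w : A.Walk a' a'') (hw : w.IsPath) :
    ∃ P : (SierpinskiProd A B f).Walk (a', b') (a'', b''),
      P.IsPath ∧ ∀ v ∈ P.support, v.1 ∈ w.support :=
  sierpinski_path_lift_general A B f hB a' a'' b' b'' w hw
end

section
/- Let A and B be connected simple graphs with A having at least two vertices and B having at least three vertices, and let f : V(A) → V(B) be a function such that the Sierpiński product A ⊗_f B is 3-connected. Then every vertex of A has degree at least 3 in A. -/
/-!
Leaving the fibre `{a} × V(B)` of `A ⊗_f B` requires passing through a vertex `(a, f a')` with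
`a'` a neighbour of `a`. Deleting these at most `deg a` vertices therefore separates the rest of
the fibre (nonempty, as `|V(B)| ≥ 3 > deg a`) from any other fibre (which exists, as `|V(A)| ≥ 2`).
So `deg a ≤ 2` would contradict `3`-connectivity.
-/

namespace SierpinskiProd

variable {α β : Type*} {A : SimpleGraph α} {B : SimpleGraph β} {f : α → β}

theorem fst_eq_of_adj_of_snd_notMem {p q : α × β} (h : (SierpinskiProd A B f).Adj p q)
    (hp : p.2 ∉ f '' A.neighborSet p.1) : q.1 = p.1 := by
  rcases h with ⟨hfst, -⟩ | ⟨hA, hpq, -⟩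
  · exact hfst.symm
  · exact absurd ⟨q.1, hA, hpq.symm⟩ hp

theorem fst_eq_of_reachable_induce_compl {a : α}
    {p q : ↥(({a} ×ˢ (f '' A.neighborSet a))ᶜ : Set (α × β))}
    (h : ((SierpinskiProd A B f).induce _).Reachable p q) (hp : p.1.1 = a) : q.1.1 = a := by
  by_contra hq
  obtain ⟨w⟩ := h
  obtain ⟨d, -, hd₁, hd₂⟩ := w.exists_boundary_dart {r | r.1.1 = a} hp hq
  have hd₁' : d.fst.1.1 = a := hd₁
  have hsnd : d.fst.1.2 ∉ f '' A.neighborSet d.fst.1.1 := fun hmem =>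
    d.fst.2 ⟨hd₁', by rwa [hd₁'] at hmem⟩
  exact hd₂ ((fst_eq_of_adj_of_snd_notMem d.adj hsnd).trans hd₁')

end SierpinskiProd

theorem sierpinski_three_connected_min_degree_general {α β : Type*} [Fintype α] [Fintype β]
    (A : SimpleGraph α) (B : SimpleGraph β) (f : α → β)
    (hcardA : 2 ≤ Fintype.card α) (hcardB : 3 ≤ Fintype.card β)
    (h3 : KConnected 3 (SierpinskiProd A B f)) :
    ∀ a : α, 3 ≤ (A.neighborSet a).ncard := by
  intro a
  by_contra! hdeg
  have himage : (f '' A.neighborSet a).ncard < 3 :=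
    (Set.ncard_image_le (Set.toFinite _)).trans_lt hdeg
  set S : Set (α × β) := {a} ×ˢ (f '' A.neighborSet a)
  have hS : S.ncard < 3 := by rwa [Set.ncard_prod, Set.ncard_singleton, one_mul]
  obtain ⟨b, hb⟩ : ∃ b, b ∉ f '' A.neighborSet a := by
    refine (Set.ne_univ_iff_exists_notMem _).1 fun huniv => ?_
    rw [huniv, Set.ncard_univ, Nat.card_eq_fintype_card] at himage
    omega
  obtain ⟨a', ha'⟩ := Fintype.exists_ne_of_one_lt_card hcardA a
  have hab : (a, b) ∈ Sᶜ := fun h => hb h.2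
  have hab' : (a', b) ∈ Sᶜ := fun h => ha' h.1
  exact ha' <| SierpinskiProd.fst_eq_of_reachable_induce_compl
    ((h3.2 S hS).preconnected ⟨_, hab⟩ ⟨_, hab'⟩) rfl

/-- **Lemma.** If `A ⊗_f B` is `3`-connected, with `A` connected on at least two vertices
and `B` connected on at least three vertices, then every vertex of `A` has degree at
least `3`. -/
theorem sierpinski_three_connected_min_degree {α β : Type*} [Fintype α] [Fintype β]
    (A : SimpleGraph α) (B : SimpleGraph β) (f : α → β)
    (hA : A.Connected) (hB : B.Connected)
    (hcardA : 2 ≤ Fintype.card α) (hcardB : 3 ≤ Fintype.card β)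
    (h3 : KConnected 3 (SierpinskiProd A B f)) :
    ∀ a : α, 3 ≤ (A.neighborSet a).ncard :=
  sierpinski_three_connected_min_degree_general A B f hcardA hcardB h3
end

section
/- Let A and B be connected simple graphs, each with at least two vertices, and let f : V(A) → V(B) be the constant function with value b ∈ V(B). Then for every vertex a of A, the vertex (a,b) is a separating vertex of the Sierpiński product A ⊗_f B. In particular, if A ⊗_f B is 2-connected (with A, B connected and each having at least two vertices), then the image of f has at least 2 elements. -/
/-!
With `f` constant at `b`, every edge of `A ⊗_f B` between two fibres `{a} × V(B)` and
`{a'} × V(B)` joins `(a, b)` to `(a', b)`. Deleting `(a, b)` therefore cuts the fibre of `a`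
off from the rest of the graph, and both parts are nonempty as soon as `A` and `B` are
nontrivial. A Sierpiński product with a function of image size at most one is of this form.
-/

namespace SierpinskiProd

variable {α β : Type*} {A : SimpleGraph α} {B : SimpleGraph β} {b : β}

lemma snd_eq_of_adj_const {p q : α × β} (h : (SierpinskiProd A B fun _ => b).Adj p q)
    (hne : p.1 ≠ q.1) : p.2 = b := by
  rcases h with ⟨heq, -⟩ | ⟨-, hp, -⟩
  exacts [absurd heq hne, hp]

lemma fst_eq_of_reachable_induce_compl_const {a : α} {p q : ({(a, b)}ᶜ : Set (α × β))}
    (h : ((SierpinskiProd A B fun _ => b).induce {(a, b)}ᶜ).Reachable p q)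
    (hp : p.1.1 = a) : q.1.1 = a := by
  rw [SimpleGraph.reachable_iff_reflTransGen] at h
  induction h with
  | refl => exact hp
  | @tail r s _ hrs ih =>
    by_contra hs
    have hr : r.1.2 = b := snd_eq_of_adj_const hrs fun h => hs (h.symm.trans ih)
    exact r.2 (Prod.ext ih hr)

variable (A B b)

theorem isSeparatingVertex_const [Nontrivial α] [Nontrivial β] (a : α) :
    IsSeparatingVertex (SierpinskiProd A B fun _ => b) (a, b) := by
  intro hconn
  obtain ⟨a', ha'⟩ := exists_ne a
  obtain ⟨b', hb'⟩ := exists_ne b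
  let p : ({(a, b)}ᶜ : Set (α × β)) := ⟨(a, b'), by simp [hb']⟩
  let q : ({(a, b)}ᶜ : Set (α × β)) := ⟨(a', b), by simp [ha']⟩
  exact ha' (fst_eq_of_reachable_induce_compl_const (hconn.preconnected p q) rfl)

end SierpinskiProd

lemma KConnected.not_isSeparatingVertex {V : Type*} [Fintype V] {k : ℕ} {G : SimpleGraph V}
    (hG : KConnected k G) (hk : 2 ≤ k) (v : V) : ¬ IsSeparatingVertex G v :=
  fun hv => hv (hG.2 {v} (by rw [Set.ncard_singleton]; omega))

lemma Function.eq_const_of_ncard_range_le_one {α β : Type*} [Finite α] {g : α → β}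
    (hg : (Set.range g).ncard ≤ 1) (a₀ : α) : g = fun _ => g a₀ := by
  have hsub : (Set.range g).Subsingleton := Set.ncard_le_one_iff_subsingleton.mp hg
  exact funext fun x => hsub (Set.mem_range_self x) (Set.mem_range_self a₀)

theorem SierpinskiProd.two_le_ncard_range_of_kConnected {α β : Type*} [Fintype α] [Fintype β]
    [Nontrivial α] [Nontrivial β] (A : SimpleGraph α) (B : SimpleGraph β) (g : α → β)
    (hg : KConnected 2 (SierpinskiProd A B g)) : 2 ≤ (Set.range g).ncard := by
  by_contra! hlt
  obtain ⟨a₀⟩ : Nonempty α := inferInstance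
  have hconst := Function.eq_const_of_ncard_range_le_one (Nat.le_of_lt_succ hlt) a₀
  rw [hconst] at hg
  exact hg.not_isSeparatingVertex le_rfl _ (isSeparatingVertex_const A B (g a₀) a₀)

theorem sierpinski_constant_separating_general {α β : Type*} [Fintype α] [Fintype β]
    (A : SimpleGraph α) (B : SimpleGraph β)
    (hcardA : 2 ≤ Fintype.card α) (hcardB : 2 ≤ Fintype.card β) (b : β) :
    (∀ a : α, IsSeparatingVertex (SierpinskiProd A B (fun _ => b)) (a, b)) ∧
    (∀ g : α → β, KConnected 2 (SierpinskiProd A B g) → 2 ≤ (Set.range g).ncard) := by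
  have : Nontrivial α := Fintype.one_lt_card_iff_nontrivial.mp hcardA
  have : Nontrivial β := Fintype.one_lt_card_iff_nontrivial.mp hcardB
  exact ⟨SierpinskiProd.isSeparatingVertex_const A B b,
    fun g => SierpinskiProd.two_le_ncard_range_of_kConnected A B g⟩

/-- **Lemma.** If `f` is the constant function with value `b`, then every vertex `(a, b)` is
a separating vertex of `A ⊗_f B`; consequently, if a Sierpiński product `A ⊗_g B` of
connected nontrivial graphs is `2`-connected, the image of `g` has at least two elements. -/
theorem sierpinski_constant_separating {α β : Type*} [Fintype α] [Fintype β]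
    (A : SimpleGraph α) (B : SimpleGraph β)
    (hA : A.Connected) (hB : B.Connected)
    (hcardA : 2 ≤ Fintype.card α) (hcardB : 2 ≤ Fintype.card β) (b : β) :
    (∀ a : α, IsSeparatingVertex (SierpinskiProd A B (fun _ => b)) (a, b)) ∧
    (∀ g : α → β, KConnected 2 (SierpinskiProd A B g) → 2 ≤ (Set.range g).ncard) :=
  sierpinski_constant_separating_general A B hcardA hcardB b
end
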